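/- arXiv:1204.1565 — 3 statements merged into one kernel-verified Lean document; each statement's English description precedes it below -/
import Mathlib

section
/- Let p > 2 be prime, r > 1 an integer with r ≡ 1 (mod p-1), and t = v_p(r-1). Let μ be a nonzero element of F_p and [μ] ∈ Z_p its Teichmüller lift. Then in Z_p[x,y], the polynomial (-[μ]x + py)^r - x^{r-1}(-[μ]x + py) is congruent to (r-1)·p·x^{r-1}·y modulo p^{t+2}. -/
/-!
Since `[μ] ^ p = [μ]` and `p - 1` is even and divides `r - 1`, we get `(-[μ]) ^ (r - 1) = 1`.
Hence in the binomial expansion of `(-[μ]x + py) ^ r` the two top terms are exactly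
`x ^ (r - 1) * (-[μ]x)` and `r * x ^ (r - 1) * py`, which cancel against the subtracted terms.
Every remaining term carries `C(r, j) * p ^ j` with `j ≥ 2`, and
`C(r, j) * j * (j - 1) = r * (r - 1) * C(r - 2, j - 2)` shows
`v_p(C(r, j)) ≥ t - v_p(j * (j - 1)) ≥ t - (j - 2)` for odd `p`.
-/
open MvPolynomial

theorem Nat.choose_mul_mul_sub_one {r j : ℕ} (hj : 2 ≤ j) :
    r.choose j * (j * (j - 1)) = r * (r - 1) * (r - 2).choose (j - 2) := by
  obtain ⟨k, rfl⟩ : ∃ k, j = k + 2 := ⟨j - 2, by omega⟩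
  rcases r with _ | _ | n
  · simp
  · simp [Nat.choose_eq_zero_of_lt]
  · have h1 := Nat.add_one_mul_choose_eq (n + 1) (k + 1)
    have h2 := Nat.add_one_mul_choose_eq n k
    simp only [Nat.add_sub_cancel]
    calc (n + 2).choose (k + 2) * ((k + 2) * (k + 1))
        = (n + 2) * ((n + 1).choose (k + 1) * (k + 1)) := by rw [← mul_assoc, ← h1]; ring
      _ = (n + 2) * (n + 1) * n.choose k := by rw [← h2]; ring

theorem Nat.lt_three_pow_sub_one {j : ℕ} (hj : 2 ≤ j) : j < 3 ^ (j - 1) := by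
  obtain ⟨k, rfl⟩ : ∃ k, j = k + 2 := ⟨j - 2, by omega⟩
  have := Nat.lt_pow_self (n := k) (by norm_num : 1 < 3)
  rw [show k + 2 - 1 = k + 1 by omega, pow_succ]
  omega

theorem padicValNat_mul_sub_one_le {p : ℕ} [hp : Fact p.Prime] (hp3 : 3 ≤ p) {j : ℕ}
    (hj : 2 ≤ j) : padicValNat p (j * (j - 1)) ≤ j - 2 := by
  set v := padicValNat p (j * (j - 1))
  have hdvd : p ^ v ∣ j * (j - 1) := pow_padicValNat_dvd
  have hcop {m : ℕ} (h : ¬ p ∣ m) : Nat.Coprime (p ^ v) m :=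
    .pow_left v ((Nat.Prime.coprime_iff_not_dvd hp.out).2 h)
  -- `j` and `j - 1` are coprime, so `p ^ v` divides one of them.
  have hle : p ^ v ≤ j := by
    by_cases hpj : p ∣ j
    · have hj1 : ¬ p ∣ j - 1 := (Nat.Prime.coprime_iff_not_dvd hp.out).1
        (((Nat.coprime_self_sub_right (by omega)).2 (Nat.coprime_one_right j)).coprime_dvd_left
          hpj)
      exact Nat.le_of_dvd (by omega) ((hcop hj1).dvd_of_dvd_mul_right hdvd)
    · exact (Nat.le_of_dvd (by omega) ((hcop hpj).dvd_of_dvd_mul_left hdvd)).trans (by omega)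
  have : p ^ v < p ^ (j - 1) :=
    hle.trans_lt ((Nat.lt_three_pow_sub_one hj).trans_le (Nat.pow_le_pow_left hp3 _))
  have := (Nat.pow_lt_pow_iff_right (by omega)).1 this
  omega

theorem pow_add_two_dvd_choose_mul_pow {p : ℕ} [Fact p.Prime] (hp3 : 3 ≤ p) {r j t : ℕ}
    (ht : p ^ t ∣ r * (r - 1)) (hj : 2 ≤ j) : p ^ (t + 2) ∣ r.choose j * p ^ j := by
  rcases lt_or_ge r j with hrj | hjr
  · simp [Nat.choose_eq_zero_of_lt hrj]
  have hid := congrArg (padicValNat p) (Nat.choose_mul_mul_sub_one (r := r) hj)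
  have hrr : r * (r - 1) ≠ 0 := Nat.mul_ne_zero (by omega) (by omega)
  have hrj : r.choose j ≠ 0 := (Nat.choose_pos hjr).ne'
  rw [padicValNat.mul hrj (Nat.mul_ne_zero (by omega) (by omega)),
    padicValNat.mul hrr (Nat.choose_pos (by omega)).ne'] at hid
  have hvt := (padicValNat_dvd_iff_le hrr).1 ht
  have hvj := padicValNat_mul_sub_one_le hp3 hj
  rw [padicValNat_dvd_iff_le (Nat.mul_ne_zero hrj (by positivity)), padicValNat.mul hrj
    (by positivity), padicValNat.prime_pow]
  omega

theorem dvd_add_pow_sub_pow_sub_mul {R : Type*} [CommRing R] {a b d : R} {n : ℕ}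
    (h : ∀ j, 2 ≤ j → d ∣ ((n + 1).choose j : R) * b ^ j) :
    d ∣ (a + b) ^ (n + 1) - a ^ (n + 1) - (n + 1) * a ^ n * b := by
  rw [add_comm a b, add_pow, Finset.sum_range_succ', Finset.sum_range_succ']
  simp only [pow_zero, pow_one, one_mul, mul_one, Nat.choose_zero_right, Nat.choose_one_right,
    Nat.sub_zero, Nat.cast_one, Nat.add_sub_cancel, zero_add]
  convert (Finset.range n).dvd_sum fun k _ =>
    (h (k + 1 + 1) (by omega)).mul_right (a ^ (n + 1 - (k + 1 + 1))) using 1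
  push_cast
  ring_nf

theorem neg_pow_eq_one_of_pow_eq_self {R : Type*} [CommRing R] [IsDomain R] {T : R} {p k : ℕ}
    (hT : T ^ p = T) (hT0 : T ≠ 0) (hp : Even (p - 1)) (hk : p - 1 ∣ k) : (-T) ^ k = 1 := by
  have h1 : T ^ (p - 1) = 1 := by
    rcases p with _ | p
    · simp
    · exact mul_right_cancel₀ hT0 (by rw [← pow_succ, Nat.add_sub_cancel, hT, one_mul])
  obtain ⟨m, rfl⟩ := hk
  rw [(hp.mul_right m).neg_pow, pow_mul, h1, one_pow]

/-- Lemma 2.3, case μ ≠ 0: in ℤ_p[x,y], (-[μ]x + py)^r - x^{r-1}(-[μ]x + py)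
    ≡ (r-1)·p·x^{r-1}·y mod p^{t+2}, with [μ] the Teichmüller lift of μ ≠ 0. -/
theorem stmt_6 (p : ℕ) [Fact p.Prime] (hp : 2 < p) (r : ℕ) (hr : 1 < r)
    (hcong : (p - 1) ∣ (r - 1)) (t : ℕ) (ht : t = padicValNat p (r - 1))
    (μ : ZMod p) (hμ : μ ≠ 0) (Tμ : ℤ_[p]) (hTμ1 : Tμ ^ p = Tμ)
    (hTμ2 : PadicInt.toZMod Tμ = μ) :
    let x : MvPolynomial (Fin 2) ℤ_[p] := X 0
    let y : MvPolynomial (Fin 2) ℤ_[p] := X 1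
    ∃ D : MvPolynomial (Fin 2) ℤ_[p],
      (-(C Tμ) * x + (p : MvPolynomial (Fin 2) ℤ_[p]) * y) ^ r
        - x ^ (r - 1) * (-(C Tμ) * x + (p : MvPolynomial (Fin 2) ℤ_[p]) * y)
        - ((r - 1 : ℤ_[p]) • ((p : MvPolynomial (Fin 2) ℤ_[p]) * x ^ (r - 1) * y))
      = (p : MvPolynomial (Fin 2) ℤ_[p]) ^ (t + 2) * D := by
  intro x y
  obtain ⟨n, rfl⟩ : ∃ n, r = n + 1 := ⟨r - 1, by omega⟩
  have hT0 : Tμ ≠ 0 := fun h => hμ (by rw [← hTμ2, h, map_zero])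
  have hroot : (-Tμ) ^ n = 1 := neg_pow_eq_one_of_pow_eq_self hTμ1 hT0
    ((Fact.out : p.Prime).even_sub_one (by omega)) (by simpa using hcong)
  have hx : (-(C Tμ) * x) ^ n = x ^ n := by
    rw [mul_pow, ← map_neg, ← map_pow, hroot, map_one, one_mul]
  have hpt : p ^ t ∣ (n + 1) * (n + 1 - 1) := ht ▸ pow_padicValNat_dvd.mul_left _
  obtain ⟨D, hD⟩ := dvd_add_pow_sub_pow_sub_mul (n := n) (a := -(C Tμ) * x)
    (b := (p : MvPolynomial (Fin 2) ℤ_[p]) * y)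
    (d := (p : MvPolynomial (Fin 2) ℤ_[p]) ^ (t + 2))
    fun j hj => by
      rw [mul_pow, ← mul_assoc]
      exact_mod_cast
        (Nat.cast_dvd_cast (pow_add_two_dvd_choose_mul_pow (by omega) hpt hj)).mul_right _
  refine ⟨D, ?_⟩
  rw [smul_eq_C_mul, map_sub, map_natCast, map_one]
  simp only [Nat.add_sub_cancel]
  push_cast
  linear_combination hD + (-(C Tμ) * x + (n + 1) * (p : MvPolynomial (Fin 2) ℤ_[p]) * y) * hx
end

section
/- Let p > 2 be prime, r > 1 an integer with r ≡ 1 (mod p-1), and t = v_p(r-1). Then for every λ ∈ F_p, the sum over μ ∈ F_p of ([μ] - [λ])^r is congruent to -[λ]·r·p modulo p^{t+2} in Z_p. -/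
/-! Write `r = (p - 1) m + 1`, so that `t = v_p(m)`. For `x = [μ] - [λ] ≠ 0` Fermat gives
`x^(p-1) = 1 + pβ`, and since `v_p(C(m, j) p^j) ≥ v_p(m) + 2` for `j ≥ 2` (`p` odd), the binomial
theorem yields `x^r = x (1 + pβ)^m ≡ x + m (x^p - x) mod p^(t+2)`. Summing over `μ` reduces the
claim to the exact identities `Σ x = -p[λ]` and `Σ x^p = -p²[λ]`, which follow by expanding
`x^p` from the power sums of the Teichmüller character: for `k > 0`, `Σ [μ]^k` is `p - 1` when
`p - 1 ∣ k` and `0` otherwise. -/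

open Finset IsLocalRing

/-- `x - y = x^p - y^p = g (x - y)` with `g ≡ p y^(p-1) ≡ 0`, and `1 - g` is a unit. -/
theorem IsLocalRing.eq_of_pow_eq_self {R : Type*} [CommRing R] [IsLocalRing R] {p : ℕ}
    (hp : (p : R) ∈ maximalIdeal R) {x y : R} (hx : x ^ p = x) (hy : y ^ p = y)
    (hxy : x - y ∈ maximalIdeal R) : x = y := by
  set g := ∑ i ∈ range p, x ^ i * y ^ (p - 1 - i)
  have hres : residue R x = residue R y := by
    rwa [← sub_eq_zero, ← map_sub, residue_eq_zero_iff]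
  have hg : g ∈ maximalIdeal R := by
    rw [← residue_eq_zero_iff, map_sum]
    calc ∑ i ∈ range p, residue R (x ^ i * y ^ (p - 1 - i))
        = ∑ _i ∈ range p, residue R y ^ (p - 1) :=
          sum_congr rfl fun i hi => by
            rw [map_mul, map_pow, map_pow, hres, ← pow_add, Nat.add_sub_of_le (by grind)]
      _ = residue R p * residue R y ^ (p - 1) := by simp
      _ = 0 := by rw [(residue_eq_zero_iff _).2 hp, zero_mul]
  have hfix : g * (x - y) = x - y := by rw [geom_sum₂_mul, hx, hy]
  have hunit : IsUnit (1 - g) := isUnit_one_sub_self_of_mem_nonunits g hg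
  rw [← sub_eq_zero, ← hunit.mul_right_eq_zero, sub_mul, one_mul, hfix, sub_self]

theorem padicValNat_add_two_le {p : ℕ} (hp2 : 2 < p) {j : ℕ} (hj : 2 ≤ j) :
    padicValNat p j + 2 ≤ j := by
  set v := padicValNat p j
  rcases Nat.eq_zero_or_pos v with hv | hv
  · omega
  have bernoulli : 1 + v * 2 ≤ 3 ^ v := by
    exact_mod_cast one_add_mul_le_pow (show (-2 : ℤ) ≤ 2 by norm_num) v
  calc v + 2 ≤ 3 ^ v := by omega
    _ ≤ p ^ v := Nat.pow_le_pow_left hp2 v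
    _ ≤ j := Nat.le_of_dvd (by omega) pow_padicValNat_dvd

section

variable {p : ℕ} [Fact p.Prime]

theorem pow_padicValNat_add_two_dvd_choose_mul_pow (hp2 : 2 < p) (m : ℕ) {j : ℕ} (hj : 2 ≤ j) :
    p ^ (padicValNat p m + 2) ∣ m.choose j * p ^ j := by
  rcases lt_or_ge m j with hmj | hjm
  · simp [Nat.choose_eq_zero_of_lt hmj]
  obtain ⟨n, rfl⟩ : ∃ n, m = n + 1 := ⟨m - 1, by omega⟩
  obtain ⟨i, rfl⟩ : ∃ i, j = i + 1 := ⟨j - 1, by omega⟩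
  have hC : (n + 1).choose (i + 1) ≠ 0 := (Nat.choose_pos hjm).ne'
  have hval : padicValNat p (n + 1) + padicValNat p (n.choose i) =
      padicValNat p ((n + 1).choose (i + 1)) + padicValNat p (i + 1) := by
    rw [← padicValNat.mul (by omega) (Nat.choose_pos (by omega)).ne',
      ← padicValNat.mul hC (by omega), Nat.add_one_mul_choose_eq]
  rw [padicValNat_dvd_iff_le (by positivity), padicValNat.mul hC (by positivity),
    padicValNat.prime_pow]
  have := padicValNat_add_two_le hp2 hj
  omega

theorem pow_padicValNat_add_two_dvd_one_add_mul_pow_sub {R : Type*} [CommRing R] (hp2 : 2 < p)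
    (β : R) (m : ℕ) :
    (p : R) ^ (padicValNat p m + 2) ∣ (1 + p * β) ^ m - 1 - m * (p * β) := by
  rcases m with _ | n
  · simp
  have expand : (1 + p * β) ^ (n + 1) - 1 - ((n + 1 : ℕ) : R) * (p * β) =
      ∑ i ∈ range n, (((n + 1).choose (i + 2) * p ^ (i + 2) : ℕ) : R) * β ^ (i + 2) := by
    rw [add_comm, add_pow, sum_range_succ', sum_range_succ']
    simp only [zero_add, one_pow, mul_one, pow_zero, pow_one, Nat.choose_zero_right,
      Nat.choose_one_right, Nat.cast_one, Nat.cast_mul, Nat.cast_pow, Nat.cast_add, mul_pow]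
    ring_nf
  rw [expand]
  refine dvd_sum fun i _ => Dvd.dvd.mul_right ?_ _
  exact_mod_cast Nat.cast_dvd_cast (pow_padicValNat_add_two_dvd_choose_mul_pow hp2 _ (by omega))

theorem pow_padicValNat_add_two_dvd_pow_mul_add_one_sub {R : Type*} [CommRing R] (hp2 : 2 < p)
    {x : R} {q : ℕ} (hx : (p : R) ∣ x ^ q - 1) (m : ℕ) :
    (p : R) ^ (padicValNat p m + 2) ∣ x ^ (q * m + 1) - x - m * (x ^ (q + 1) - x) := by
  obtain ⟨β, hβ⟩ := hx
  have hxq : x ^ q = 1 + p * β := by rw [← hβ]; ring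
  have : x ^ (q * m + 1) - x - m * (x ^ (q + 1) - x) =
      ((1 + p * β) ^ m - 1 - m * (p * β)) * x := by
    rw [pow_succ, pow_mul, pow_succ, hxq]; ring
  rw [this]
  exact (pow_padicValNat_add_two_dvd_one_add_mul_pow_sub hp2 β m).mul_right x

end

theorem MulChar.sum_pow_of_injective {F R : Type*} [Field F] [Fintype F] [DecidableEq F]
    [CommRing R] [IsDomain R] {χ : MulChar F R} (hχ : Function.Injective χ) {k : ℕ} (hk : k ≠ 0) :
    ∑ a, χ a ^ k = if Fintype.card F - 1 ∣ k then ((Fintype.card F - 1 : ℕ) : R) else 0 := by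
  have hpow : χ ^ k = 1 ↔ Fintype.card F - 1 ∣ k := by
    rw [← Fintype.card_units, ← Nat.card_eq_fintype_card, ← IsCyclic.exponent_eq_card,
      Monoid.exponent_dvd_iff_forall_pow_eq_one, MulChar.eq_one_iff]
    refine forall_congr' fun a => ?_
    rw [MulChar.pow_apply' χ hk, ← map_pow, ← Units.val_pow_eq_pow_val, ← χ.map_one,
      hχ.eq_iff, Units.val_eq_one]
  simp_rw [← MulChar.pow_apply' χ hk]
  split_ifs with h
  · rw [hpow.2 h, MulChar.sum_one_eq_card_units, Fintype.card_units]
  · exact MulChar.sum_eq_zero_of_ne_one (mt hpow.1 h)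

namespace PadicInt

variable {p : ℕ} [hp : Fact p.Prime]

theorem p_dvd_pow_sub_one_sub_one {x : ℤ_[p]} (hx : toZMod x ≠ 0) :
    (p : ℤ_[p]) ∣ x ^ (p - 1) - 1 := by
  rw [← Ideal.mem_span_singleton, ← maximalIdeal_eq_span_p, ← ker_toZMod, RingHom.mem_ker,
    map_sub, map_pow, ZMod.pow_card_sub_one_eq_one hx, map_one, sub_self]

theorem eq_of_pow_eq_self {x y : ℤ_[p]} (hx : x ^ p = x) (hy : y ^ p = y)
    (h : toZMod x = toZMod y) : x = y :=
  IsLocalRing.eq_of_pow_eq_self (by simp [maximalIdeal_eq_span_p])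
    hx hy (by rw [← ker_toZMod, RingHom.mem_ker, map_sub, h, sub_self])

def teichmullerChar {T : ZMod p → ℤ_[p]} (hT1 : ∀ μ, T μ ^ p = T μ)
    (hT2 : ∀ μ, toZMod (T μ) = μ) : MulChar (ZMod p) ℤ_[p] where
  toFun := T
  map_one' := eq_of_pow_eq_self (hT1 1) (one_pow p) (by rw [hT2, map_one])
  map_mul' a b := eq_of_pow_eq_self (hT1 _) (by rw [mul_pow, hT1, hT1])
    (by rw [hT2, map_mul, hT2, hT2])
  map_nonunit' a ha := eq_of_pow_eq_self (hT1 a) (zero_pow hp.out.ne_zero)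
    (by rw [hT2, map_zero]; simpa using ha)

@[simp]
theorem teichmullerChar_apply {T : ZMod p → ℤ_[p]} (hT1 : ∀ μ, T μ ^ p = T μ)
    (hT2 : ∀ μ, toZMod (T μ) = μ) (μ : ZMod p) : teichmullerChar hT1 hT2 μ = T μ :=
  rfl

section Teichmuller

variable {T : ZMod p → ℤ_[p]} (hT1 : ∀ μ, T μ ^ p = T μ) (hT2 : ∀ μ, toZMod (T μ) = μ)
include hT1 hT2

theorem sum_teichmuller_pow {k : ℕ} (hk : k ≠ 0) :
    ∑ μ, T μ ^ k = if p - 1 ∣ k then ((p - 1 : ℕ) : ℤ_[p]) else 0 := by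
  simpa [ZMod.card] using MulChar.sum_pow_of_injective (χ := teichmullerChar hT1 hT2)
    (Function.LeftInverse.injective (g := toZMod) hT2) hk

theorem sum_teichmuller_sub (hp2 : 2 < p) (c : ℤ_[p]) :
    ∑ μ, (T μ - c) = -(p * c) := by
  have h := sum_teichmuller_pow hT1 hT2 one_ne_zero
  rw [if_neg fun h => by have := Nat.le_of_dvd one_pos h; omega] at h
  simp only [pow_one] at h
  simp [sum_sub_distrib, h]

theorem sum_teichmuller_sub_pow_self (hp2 : 2 < p) {c : ℤ_[p]} (hc : c ^ p = c) :
    ∑ μ, (T μ - c) ^ p = -(p ^ 2 * c) := by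
  have hdvd : ∀ k ∈ range (p + 1), p - 1 ∣ k → k ≠ 0 → k = p - 1 := fun k hk hdvd hk0 =>
    Nat.eq_of_dvd_of_lt_two_mul hk0 hdvd (by grind)
  calc ∑ μ, (T μ - c) ^ p
      = ∑ k ∈ range (p + 1), (∑ μ, T μ ^ k) * ((-c) ^ (p - k) * p.choose k) := by
        simp only [sub_eq_add_neg, add_pow, sum_mul, mul_assoc]
        exact sum_comm
    _ = p * (-c) ^ p + ((p - 1 : ℕ) : ℤ_[p]) * ((-c) ^ (p - (p - 1)) * p.choose (p - 1)) := by
        rw [sum_eq_add 0 (p - 1) (by omega) (fun k hk hk' => ?_) (by simp) (by simp),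
          sum_teichmuller_pow hT1 hT2 (k := p - 1) (by omega), if_pos dvd_rfl]
        · simp [ZMod.card]
        · rw [sum_teichmuller_pow hT1 hT2 hk'.1, if_neg (fun h => hk'.2 (hdvd k hk h hk'.1)),
            zero_mul]
    _ = -(p ^ 2 * c) := by
        rw [Odd.neg_pow (hp.out.odd_of_ne_two (by omega)), hc, Nat.sub_sub_self (by omega),
          Nat.choose_symm (by omega), Nat.choose_one_right, Nat.cast_sub (by omega)]
        ring

end Teichmuller
end PadicInt

/-- Corollary 2.5(1): for all λ ∈ F_p, Σ_{μ ∈ F_p} ([μ] - [λ])^r ≡ -[λ]·r·p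
    (mod p^{t+2}) in ℤ_p. -/
theorem stmt_9 (p : ℕ) [Fact p.Prime] (hp : 2 < p) (r : ℕ) (hr : 1 < r)
    (hcong : (p - 1) ∣ (r - 1)) (t : ℕ) (ht : t = padicValNat p (r - 1))
    (T : ZMod p → ℤ_[p]) (hT1 : ∀ μ, T μ ^ p = T μ)
    (hT2 : ∀ μ, PadicInt.toZMod (T μ) = μ) (lam : ZMod p) :
    (p : ℤ_[p]) ^ (t + 2) ∣
      (∑ μ : ZMod p, (T μ - T lam) ^ r) - (-(T lam) * (r : ℤ_[p]) * p) := by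
  obtain ⟨m, hm⟩ := hcong
  have hr' : r = (p - 1) * m + 1 := by omega
  have ht' : t = padicValNat p m := by
    rw [ht, hm, padicValNat.mul (by omega) (by rintro rfl; omega),
      padicValNat.eq_zero_of_not_dvd (Nat.not_dvd_of_pos_of_lt (by omega) (by omega)), zero_add]
  have key (μ : ZMod p) : (p : ℤ_[p]) ^ (t + 2) ∣
      (T μ - T lam) ^ r - (T μ - T lam) - m * ((T μ - T lam) ^ p - (T μ - T lam)) := by
    rcases eq_or_ne μ lam with rfl | hne
    · simp [zero_pow (by omega : r ≠ 0), zero_pow (by omega : p ≠ 0)]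
    have hunit := PadicInt.p_dvd_pow_sub_one_sub_one (x := T μ - T lam)
      (by rwa [map_sub, hT2, hT2, sub_ne_zero])
    have := pow_padicValNat_add_two_dvd_pow_mul_add_one_sub hp hunit m
    rwa [Nat.sub_add_cancel (by omega), ← hr', ← ht'] at this
  suffices h : (∑ μ, (T μ - T lam) ^ r) - (-(T lam) * (r : ℤ_[p]) * p) =
      ∑ μ, ((T μ - T lam) ^ r - (T μ - T lam) - m * ((T μ - T lam) ^ p - (T μ - T lam))) by
    rw [h]
    exact dvd_sum fun μ _ => key μ
  simp only [sum_sub_distrib, ← mul_sum, PadicInt.sum_teichmuller_sub hT1 hT2 hp,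
    PadicInt.sum_teichmuller_sub_pow_self hT1 hT2 hp (hT1 lam)]
  rw [hr']
  push_cast [Nat.cast_sub (by omega : 1 ≤ p)]
  ring
end

section
/- Let p > 2 be prime, r > 1 with r ≡ 1 (mod p-1), and t_1 a real number with t_1 ≤ t + 2 where t = v_p(r-1). Then in Z_p[x,y], the sum over μ ∈ F_p of ([μ]px + y)^r is congruent to p·y^r modulo p^{t+2}·Z_p[x,y] (hence modulo p^{t_1}). -/
/-!
Expanding by the binomial theorem, the coefficient of `x ^ n * y ^ (r - n)` in
`∑ μ, ([μ] p x + y) ^ r` is `(∑ μ, [μ] ^ n) * p ^ n * C(r, n)`. For `n = 0` this is `p`, for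
`n = 1` it vanishes because `[-μ] = -[μ]` (`p` odd, and a root of `X ^ p - X` in `ℤ_p` is
determined by its residue), and for `n ≥ 2` the identity
`C(r, n) * n * (n - 1) = r * (r - 1) * C(r - 2, n - 2)` gives
`v_p(C(r, n)) ≥ t - v_p(n) - v_p(n - 1) ≥ t + 2 - n`.
-/

open MvPolynomial Finset

section Valuation

variable {p : ℕ} [Fact p.Prime]

theorem padicValNat_add_two_le_of_dvd (hp : 2 < p) {m : ℕ} (hm : m ≠ 0) (hpm : p ∣ m) :
    padicValNat p m + 2 ≤ m := by
  set v := padicValNat p m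
  have hv : 1 ≤ v := one_le_padicValNat_of_dvd hm hpm
  have bernoulli : 1 + v * 2 ≤ 3 ^ v := by
    exact_mod_cast one_add_mul_le_pow (by norm_num : (-2 : ℤ) ≤ 2) v
  calc v + 2 ≤ 3 ^ v := by omega
    _ ≤ p ^ v := Nat.pow_le_pow_left hp v
    _ ≤ m := Nat.le_of_dvd (Nat.pos_of_ne_zero hm) pow_padicValNat_dvd

theorem padicValNat_add_padicValNat_sub_one_add_two_le (hp : 2 < p) {n : ℕ} (hn : 2 ≤ n) :
    padicValNat p n + padicValNat p (n - 1) + 2 ≤ n := by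
  have hcop : ¬(p ∣ n ∧ p ∣ n - 1) := fun ⟨h, h'⟩ => by
    have : p ∣ n - (n - 1) := Nat.dvd_sub h h'
    rw [Nat.sub_sub_self (by omega), Nat.dvd_one] at this
    exact (Fact.out : p.Prime).one_lt.ne' this
  by_cases hdvd : p ∣ n
  · have := padicValNat_add_two_le_of_dvd hp (by omega) hdvd
    rw [padicValNat.eq_zero_of_not_dvd fun h => hcop ⟨hdvd, h⟩]
    omega
  · rw [padicValNat.eq_zero_of_not_dvd hdvd]
    by_cases hdvd' : p ∣ n - 1
    · have := padicValNat_add_two_le_of_dvd hp (by omega) hdvd'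
      omega
    · rw [padicValNat.eq_zero_of_not_dvd hdvd']
      omega

theorem add_two_choose_add_two_mul (r n : ℕ) :
    (r + 2).choose (n + 2) * ((n + 2) * (n + 1)) = (r + 2) * (r + 1) * r.choose n := by
  rw [← mul_assoc, ← Nat.add_one_mul_choose_eq, mul_assoc, mul_comm,
    ← Nat.add_one_mul_choose_eq]
  ring

theorem padicValNat_sub_one_add_two_le_add_padicValNat_choose (hp : 2 < p) {r n : ℕ}
    (hn : 2 ≤ n) (hnr : n ≤ r) :
    padicValNat p (r - 1) + 2 ≤ n + padicValNat p (r.choose n) := by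
  obtain ⟨n, rfl⟩ : ∃ k, n = k + 2 := ⟨n - 2, by omega⟩
  obtain ⟨r, rfl⟩ : ∃ s, r = s + 2 := ⟨r - 2, by omega⟩
  have hval := congrArg (padicValNat p) (add_two_choose_add_two_mul r n)
  rw [padicValNat.mul (Nat.choose_pos hnr).ne' (by positivity),
    padicValNat.mul (by omega) (by omega), padicValNat.mul (by positivity)
    (Nat.choose_pos (by omega)).ne', padicValNat.mul (by omega) (by omega)] at hval
  have := padicValNat_add_padicValNat_sub_one_add_two_le hp (n := n + 2) (by omega)
  rw [show n + 2 - 1 = n + 1 by omega] at this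
  rw [show r + 2 - 1 = r + 1 by omega]
  omega

theorem pow_padicValNat_sub_one_add_two_dvd_pow_mul_choose (hp : 2 < p) (r : ℕ) {n : ℕ}
    (hn : 2 ≤ n) :
    p ^ (padicValNat p (r - 1) + 2) ∣ p ^ n * r.choose n := by
  rcases le_or_gt n r with hnr | hrn
  · calc p ^ (padicValNat p (r - 1) + 2) ∣ p ^ (n + padicValNat p (r.choose n)) :=
          pow_dvd_pow p (padicValNat_sub_one_add_two_le_add_padicValNat_choose hp hn hnr)
      _ ∣ p ^ n * r.choose n := by rw [pow_add]; exact mul_dvd_mul_left _ pow_padicValNat_dvd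
  · rw [Nat.choose_eq_zero_of_lt hrn, mul_zero]
    exact dvd_zero _

end Valuation

theorem sum_mul_add_pow {R ι : Type*} [CommRing R] (s : Finset ι) (a : ι → R)
    (z y : R) (r : ℕ) :
    ∑ i ∈ s, (a i * z + y) ^ r
      = ∑ n ∈ range (r + 1), (∑ i ∈ s, a i ^ n) * z ^ n * y ^ (r - n) * r.choose n := by
  simp only [add_pow, mul_pow, sum_mul]
  exact sum_comm

theorem dvd_sum_mul_add_pow_sub {R ι : Type*} [CommRing R] (s : Finset ι) {a : ι → R}
    (ha : ∑ i ∈ s, a i = 0) {q : R} {d r : ℕ}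
    (hd : ∀ n, 2 ≤ n → q ^ d ∣ q ^ n * r.choose n) (x y : R) :
    q ^ d ∣ ∑ i ∈ s, (a i * q * x + y) ^ r - s.card * y ^ r := by
  simp only [mul_assoc, sum_mul_add_pow, sum_range_succ', pow_zero, sum_const, nsmul_one, one_mul,
    Nat.choose_zero_right, Nat.cast_one, mul_one, Nat.sub_zero, add_sub_cancel_right]
  refine dvd_sum fun n _ => ?_
  rcases Nat.eq_zero_or_pos n with rfl | hn
  · simp [ha]
  · exact (hd (n + 1) (by omega)).trans
      ⟨(∑ i ∈ s, a i ^ (n + 1)) * x ^ (n + 1) * y ^ (r - (n + 1)), by ring⟩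

theorem pow_pow_eq_self_of_pow_eq_self {M : Type*} [Monoid M] {c : M} {p : ℕ} (hc : c ^ p = c)
    (k : ℕ) : c ^ p ^ k = c := by
  induction k with
  | zero => rw [pow_zero, pow_one]
  | succ k ih => rw [pow_succ, pow_mul, ih, hc]

namespace PadicInt

variable {p : ℕ} [Fact p.Prime]

theorem eq_zero_of_forall_pow_dvd {x : ℤ_[p]} (h : ∀ n, (p : ℤ_[p]) ^ n ∣ x) : x = 0 := by
  by_contra hx
  have := (mem_span_pow_iff_le_valuation x hx (x.valuation + 1)).1
    (Ideal.mem_span_singleton.2 (h _))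
  omega

theorem dvd_of_toZMod_eq_zero {x : ℤ_[p]} (hx : toZMod x = 0) : (p : ℤ_[p]) ∣ x := by
  rw [← Ideal.mem_span_singleton, ← maximalIdeal_eq_span_p, ← ker_toZMod]
  exact hx

theorem eq_of_pow_eq_self_of_dvd_sub {a b : ℤ_[p]} (ha : a ^ p = a) (hb : b ^ p = b)
    (hab : (p : ℤ_[p]) ∣ a - b) : a = b := by
  refine sub_eq_zero.1 (eq_zero_of_forall_pow_dvd fun n => ?_)
  cases n with
  | zero => exact one_dvd _
  | succ k =>
    simpa only [pow_pow_eq_self_of_pow_eq_self ha, pow_pow_eq_self_of_pow_eq_self hb]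
      using dvd_sub_pow_of_dvd_sub hab k

theorem sum_eq_zero_of_pow_eq_self (hp : Odd p) {T : ZMod p → ℤ_[p]}
    (hT : ∀ μ, T μ ^ p = T μ) (hT' : ∀ μ, toZMod (T μ) = μ) : ∑ μ, T μ = 0 := by
  have hneg : ∀ μ, T (-μ) = -T μ := fun μ =>
    eq_of_pow_eq_self_of_dvd_sub (hT _) (by rw [hp.neg_pow, hT]) <|
      dvd_of_toZMod_eq_zero (by rw [map_sub, map_neg, hT', hT', sub_neg_eq_add, neg_add_cancel])
  have hsum_neg : ∑ μ, T μ = -∑ μ, T μ := calc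
    ∑ μ, T μ = ∑ μ, T (-μ) := (Equiv.sum_comp (Equiv.neg (ZMod p)) T).symm
    _ = -∑ μ, T μ := by simp only [hneg, sum_neg_distrib]
  exact self_eq_neg.1 hsum_neg

end PadicInt

theorem stmt_17_general (p : ℕ) [Fact p.Prime] (hp : 2 < p) (r : ℕ)
    (t : ℕ) (ht : t = padicValNat p (r - 1))
    (T : ZMod p → ℤ_[p]) (hT1 : ∀ μ, T μ ^ p = T μ)
    (hT2 : ∀ μ, PadicInt.toZMod (T μ) = μ) :
    let x : MvPolynomial (Fin 2) ℤ_[p] := X 0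
    let y : MvPolynomial (Fin 2) ℤ_[p] := X 1
    ∃ D : MvPolynomial (Fin 2) ℤ_[p],
      (∑ μ : ZMod p, (C (T μ) * (p : MvPolynomial (Fin 2) ℤ_[p]) * x + y) ^ r)
        - (p : MvPolynomial (Fin 2) ℤ_[p]) * y ^ r
      = (p : MvPolynomial (Fin 2) ℤ_[p]) ^ (t + 2) * D := by
  intro x y
  have hsum : ∑ μ, C (T μ) = (0 : MvPolynomial (Fin 2) ℤ_[p]) := by
    rw [← map_sum, PadicInt.sum_eq_zero_of_pow_eq_self
      ((Fact.out : p.Prime).odd_of_ne_two hp.ne') hT1 hT2, map_zero]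
  have hchoose (n : ℕ) (hn : 2 ≤ n) : (p : MvPolynomial (Fin 2) ℤ_[p]) ^ (t + 2) ∣
      (p : MvPolynomial (Fin 2) ℤ_[p]) ^ n * r.choose n := by
    subst ht
    exact_mod_cast Nat.cast_dvd_cast (pow_padicValNat_sub_one_add_two_dvd_pow_mul_choose hp r hn)
  obtain ⟨D, hD⟩ := dvd_sum_mul_add_pow_sub univ hsum hchoose x y
  rw [card_univ, ZMod.card] at hD
  exact ⟨D, hD⟩

/-- In ℤ_p[x,y], Σ_{μ ∈ F_p} ([μ]px + y)^r ≡ p·y^r (mod p^{t+2}), where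
    t = v_p(r-1), r > 1, r ≡ 1 (mod p-1); in particular the congruence holds
    modulo p^{t₁} for any t₁ ≤ t + 2. -/
theorem stmt_17 (p : ℕ) [Fact p.Prime] (hp : 2 < p) (r : ℕ) (hr : 1 < r)
    (hcong : (p - 1) ∣ (r - 1)) (t : ℕ) (ht : t = padicValNat p (r - 1))
    (T : ZMod p → ℤ_[p]) (hT1 : ∀ μ, T μ ^ p = T μ)
    (hT2 : ∀ μ, PadicInt.toZMod (T μ) = μ) :
    let x : MvPolynomial (Fin 2) ℤ_[p] := X 0
    let y : MvPolynomial (Fin 2) ℤ_[p] := X 1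
    ∃ D : MvPolynomial (Fin 2) ℤ_[p],
      (∑ μ : ZMod p, (C (T μ) * (p : MvPolynomial (Fin 2) ℤ_[p]) * x + y) ^ r)
        - (p : MvPolynomial (Fin 2) ℤ_[p]) * y ^ r
      = (p : MvPolynomial (Fin 2) ℤ_[p]) ^ (t + 2) * D :=
  stmt_17_general p hp r t ht T hT1 hT2
end
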